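/- arXiv:1402.3917 — 3 statements merged into one kernel-verified Lean document; each statement's English description precedes it below -/
import Mathlib

section
/- Let G be a locally compact second countable group, π a strongly continuous unitary representation of G on a separable Hilbert space H, and u ∈ H an admissible vector, i.e. the voice transform V₂v(x) = ⟨v, π(x)u⟩ is an isometry from H into L²(G). Then for every v ∈ H, the convolution V₂v ⋆ K exists and equals V₂v, where K = V₂u; in particular K ⋆ K = K. -/
open MeasureTheory
open scoped ComplexInnerProductSpace

/-! Admissibility says that `y ↦ π y u` is a continuous Parseval frame: the analysis map
`v ↦ ⟪π · u, v⟫` is a linear isometry `V` into `L²(G)`, so by polarization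
`⟪V v', V v⟫_{L²} = ⟪v', v⟫`. Unitarity gives `⟪π (y⁻¹ x) u, u⟫ = ⟪π x u, π y u⟫`, which turns the
convolution `(V v ⋆ K)(x)` into the `L²` pairing of `V (π x u)` with `V v`, i.e. `⟪π x u, v⟫`. -/

section ParsevalFrame

variable {α 𝕜 E : Type*} [MeasurableSpace α] [RCLike 𝕜]
  [NormedAddCommGroup E] [InnerProductSpace 𝕜 E]

def IsParsevalFrame (μ : Measure α) (w : α → E) : Prop :=
  ∀ v : E, MemLp (fun y => inner 𝕜 (w y) v) 2 μ ∧
    eLpNorm (fun y => inner 𝕜 (w y) v) 2 μ = ENNReal.ofReal ‖v‖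

namespace IsParsevalFrame

variable {μ : Measure α} {w : α → E} (hw : IsParsevalFrame (𝕜 := 𝕜) μ w)
include hw

def analysis : E →ₗᵢ[𝕜] Lp 𝕜 2 μ where
  toFun v := (hw v).1.toLp _
  map_add' v v' := by
    refine Lp.ext ?_
    filter_upwards [(hw (v + v')).1.coeFn_toLp, Lp.coeFn_add ((hw v).1.toLp _) ((hw v').1.toLp _),
      (hw v).1.coeFn_toLp, (hw v').1.coeFn_toLp] with y h_sum h_add h h'
    rw [h_sum, h_add, Pi.add_apply, h, h', inner_add_right]
  map_smul' c v := by
    refine Lp.ext ?_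
    filter_upwards [(hw (c • v)).1.coeFn_toLp, Lp.coeFn_smul c ((hw v).1.toLp _),
      (hw v).1.coeFn_toLp] with y h_smul h_coe h
    rw [RingHom.id_apply, h_smul, h_coe, Pi.smul_apply, h, inner_smul_right, smul_eq_mul]
  norm_map' v := by
    change ‖(hw v).1.toLp _‖ = ‖v‖
    rw [Lp.norm_toLp, (hw v).2, ENNReal.toReal_ofReal (norm_nonneg v)]

theorem analysis_ae_eq (v : E) : ⇑(hw.analysis v) =ᵐ[μ] fun y => inner 𝕜 (w y) v :=
  (hw v).1.coeFn_toLp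

theorem inner_analysis_ae_eq (v' v : E) :
    (fun y => inner 𝕜 (hw.analysis v' y) (hw.analysis v y)) =ᵐ[μ]
      fun y => inner 𝕜 v' (w y) * inner 𝕜 (w y) v := by
  filter_upwards [hw.analysis_ae_eq v', hw.analysis_ae_eq v] with y h' h
  rw [RCLike.inner_apply, h', h, inner_conj_symm, mul_comm]

theorem integrable_inner_mul_inner (v' v : E) :
    Integrable (fun y => inner 𝕜 v' (w y) * inner 𝕜 (w y) v) μ :=
  (L2.integrable_inner (hw.analysis v') (hw.analysis v)).congr (hw.inner_analysis_ae_eq v' v)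

theorem integral_inner_mul_inner (v' v : E) :
    ∫ y, inner 𝕜 v' (w y) * inner 𝕜 (w y) v ∂μ = inner 𝕜 v' v :=
  calc ∫ y, inner 𝕜 v' (w y) * inner 𝕜 (w y) v ∂μ
      = ∫ y, inner 𝕜 (hw.analysis v' y) (hw.analysis v y) ∂μ :=
        (integral_congr_ae (hw.inner_analysis_ae_eq v' v)).symm
    _ = inner 𝕜 (hw.analysis v') (hw.analysis v) := (L2.inner_def _ _).symm
    _ = inner 𝕜 v' v := hw.analysis.inner_map_map v' v

end IsParsevalFrame

end ParsevalFrame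

theorem inner_map_inv_mul_apply {G 𝕜 E : Type*} [Group G] [RCLike 𝕜] [NormedAddCommGroup E]
    [InnerProductSpace 𝕜 E] (π : G →* (E ≃ₗᵢ[𝕜] E)) (x y : G) (u : E) :
    inner 𝕜 (π (y⁻¹ * x) u) u = inner 𝕜 (π x u) (π y u) := by
  rw [← (π y).inner_map_map, ← Function.comp_apply (f := π y), ← LinearIsometryEquiv.coe_mul,
    ← map_mul, mul_inv_cancel_left]

theorem voice_transform_reproducing_general
    {G : Type*} [Group G]
    [MeasurableSpace G]
    (μ : Measure G)
    {H : Type*} [NormedAddCommGroup H] [InnerProductSpace ℂ H]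
    (π : G →* (H ≃ₗᵢ[ℂ] H))
    (u : H)
    (hadm : ∀ v : H, MemLp (fun x => ⟪π x u, v⟫) 2 μ ∧
      eLpNorm (fun x => ⟪π x u, v⟫) 2 μ = ENNReal.ofReal ‖v‖) :
    (∀ (v : H) (x : G),
      Integrable (fun y => ⟪π y u, v⟫ * ⟪π (y⁻¹ * x) u, u⟫) μ ∧
      ∫ y, ⟪π y u, v⟫ * ⟪π (y⁻¹ * x) u, u⟫ ∂μ = ⟪π x u, v⟫) ∧
    (∀ x : G, ∫ y, ⟪π y u, u⟫ * ⟪π (y⁻¹ * x) u, u⟫ ∂μ = ⟪π x u, u⟫) := by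
  have hframe : IsParsevalFrame μ fun y => π y u := hadm
  have hintegrand : ∀ (v : H) (x : G),
      (fun y => ⟪π y u, v⟫ * ⟪π (y⁻¹ * x) u, u⟫) = fun y => ⟪π x u, π y u⟫ * ⟪π y u, v⟫ := by
    intro v x
    funext y
    rw [inner_map_inv_mul_apply, mul_comm]
  have hreproducing : ∀ (v : H) (x : G),
      Integrable (fun y => ⟪π y u, v⟫ * ⟪π (y⁻¹ * x) u, u⟫) μ ∧
      ∫ y, ⟪π y u, v⟫ * ⟪π (y⁻¹ * x) u, u⟫ ∂μ = ⟪π x u, v⟫ := fun v x => by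
    rw [hintegrand]
    exact ⟨hframe.integrable_inner_mul_inner _ v, hframe.integral_inner_mul_inner _ v⟩
  exact ⟨hreproducing, fun x => (hreproducing u x).2⟩

/-- Reproducing formula: if `π` is a strongly continuous unitary representation of a locally
compact second countable group `G` on a separable Hilbert space `H` and `u` is an admissible
vector (the voice transform `V₂v(x) = ⟨v, π(x)u⟩` is an isometry into `L²(G)`), then for every
`v ∈ H` the convolution `V₂v ⋆ K` exists and equals `V₂v`, where `K = V₂u`; in particular
`K ⋆ K = K`. -/
theorem voice_transform_reproducing
    {G : Type*} [Group G] [TopologicalSpace G] [IsTopologicalGroup G]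
    [LocallyCompactSpace G] [SecondCountableTopology G]
    [MeasurableSpace G] [BorelSpace G]
    (μ : Measure G) [μ.IsHaarMeasure]
    {H : Type*} [NormedAddCommGroup H] [InnerProductSpace ℂ H] [CompleteSpace H]
    [SecondCountableTopology H]
    (π : G →* (H ≃ₗᵢ[ℂ] H))
    (hπ_cont : ∀ v : H, Continuous fun x => π x v)
    (u : H)
    (hadm : ∀ v : H, MemLp (fun x => ⟪π x u, v⟫) 2 μ ∧
      eLpNorm (fun x => ⟪π x u, v⟫) 2 μ = ENNReal.ofReal ‖v‖) :
    (∀ (v : H) (x : G),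
      Integrable (fun y => ⟪π y u, v⟫ * ⟪π (y⁻¹ * x) u, u⟫) μ ∧
      ∫ y, ⟪π y u, v⟫ * ⟪π (y⁻¹ * x) u, u⟫ ∂μ = ⟪π x u, v⟫) ∧
    (∀ x : G, ∫ y, ⟪π y u, u⟫ * ⟪π (y⁻¹ * x) u, u⟫ ∂μ = ⟪π x u, u⟫) :=
  voice_transform_reproducing_general μ π u hadm
end

section
/- For G = ℝ with Lebesgue measure and Ω ⊂ ℝ compact, a vector u in the Paley–Wiener space B²_Ω = {v ∈ L²(ℝ) : supp(v̂) ⊆ Ω} is admissible for the translation representation π(b)v(x) = v(x−b) (i.e. v ↦ (b ↦ ⟨v, π(b)u⟩) is an isometry B²_Ω → L²(ℝ)) if and only if |û(ξ)| = 1 for almost every ξ ∈ Ω. -/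
/-!
The voice transform of `v` is the inverse Fourier transform of `v̂ · conj û`, an integrable
function as a product of two `L²` functions. By Plancherel, admissibility thus says
`‖v̂ · conj û‖₂ = ‖v̂‖₂` for every `v̂ ∈ L²` vanishing off `Ω`. This clearly holds when `|û| = 1`
a.e. on `Ω`; conversely, testing with the indicator of a set `s ⊆ Ω` of finite measure gives
`∫_s |û|² = |s|`, which forces `|û|² = 1` a.e. on `Ω`.
-/

open MeasureTheory Complex
open scoped FourierTransform ENNReal

section FourierL2

variable {V : Type*} [NormedAddCommGroup V] [InnerProductSpace ℝ V] [FiniteDimensional ℝ V]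
  [MeasurableSpace V] [BorelSpace V]

theorem SchwartzMap.integral_fourierInv_smul_eq_of_integrable {F : Type*} [NormedAddCommGroup F]
    [NormedSpace ℂ F] [CompleteSpace F] (g : SchwartzMap V ℂ) {f : V → F} (hf : Integrable f) :
    ∫ x, 𝓕⁻ g x • f x = ∫ x, g x • 𝓕⁻ f x := by
  have hL : (-innerₗ V).flip = -innerₗ V := by
    ext v w
    simp [real_inner_comm]
  have := VectorFourier.integral_fourierIntegral_smul_eq_flip (μ := volume) (ν := volume)
    (L := -innerₗ V) Real.continuous_fourierChar continuous_inner.neg g.integrable hf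
  rw [hL] at this
  rw [SchwartzMap.fourierInv_coe]
  exact this

variable {F : Type*} [NormedAddCommGroup F] [InnerProductSpace ℂ F] [CompleteSpace F]

open scoped ContDiff in
theorem MeasureTheory.MemLp.coeFn_fourierInv_toLp {f : V → F} (hf₂ : MemLp f 2)
    (hf : Integrable f) :
    ((𝓕⁻ (hf₂.toLp f) : Lp F 2 (volume : Measure V)) : V → F) =ᵐ[volume] 𝓕⁻ f := by
  -- both sides define the same tempered distribution
  refine ae_eq_of_integral_contDiff_smul_eq ((Lp.memLp _).locallyIntegrable (by norm_num))
    (VectorFourier.fourierIntegral_continuous Real.continuous_fourierChar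
      continuous_inner.neg hf).locallyIntegrable fun g g_smooth g_cpt => ?_
  have hg₁ : HasCompactSupport (Complex.ofRealCLM ∘ g) := g_cpt.comp_left rfl
  have hg₂ : ContDiff ℝ ∞ (Complex.ofRealCLM ∘ g) := by fun_prop
  set ψ := hg₁.toSchwartzMap hg₂
  calc ∫ x, g x • ((𝓕⁻ (hf₂.toLp f) : Lp F 2 (volume : Measure V)) : V → F) x
      = Lp.toTemperedDistribution (𝓕⁻ (hf₂.toLp f) : Lp F 2 (volume : Measure V)) ψ := by
        simp [ψ]
    _ = Lp.toTemperedDistribution (hf₂.toLp f) (𝓕⁻ ψ) := by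
      rw [← Lp.fourierInv_toTemperedDistribution_eq]; rfl
    _ = ∫ x, 𝓕⁻ ψ x • f x := by
      rw [Lp.toTemperedDistribution_apply]
      exact integral_congr_ae (by filter_upwards [hf₂.coeFn_toLp] with x hx; rw [hx])
    _ = ∫ x, g x • 𝓕⁻ f x := by
      rw [ψ.integral_fourierInv_smul_eq_of_integrable hf]
      simp [ψ]

theorem MeasureTheory.MemLp.eLpNorm_fourierInv_eq {f : V → F} (hf₂ : MemLp f 2)
    (hf : Integrable f) : eLpNorm (𝓕⁻ f) 2 volume = eLpNorm f 2 volume := by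
  rw [← eLpNorm_congr_ae (hf₂.coeFn_fourierInv_toLp hf), ← Lp.enorm_def, ← Lp.enorm_toLp hf₂]
  exact (Lp.fourierTransformₗᵢ V F).symm.enorm_map _

end FourierL2

theorem Real.fourierInv_eq_integral_mul_exp (W : ℝ → ℂ) (b : ℝ) :
    𝓕⁻ W b = ∫ ξ : ℝ, W ξ * Complex.exp (2 * Real.pi * I * b * ξ) := by
  rw [Real.fourierInv_eq']
  congr 1 with ξ
  rw [smul_eq_mul, mul_comm]
  congr 2
  simp only [RCLike.inner_apply, ringHom_apply, ofReal_mul, ofReal_ofNat]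
  ring

-- `b ↦ ⟨v, π(b)u⟩`, written in terms of `U = û` and `V = v̂`
noncomputable def voiceTransform (U V : ℝ → ℂ) (b : ℝ) : ℂ :=
  ∫ ξ : ℝ, V ξ * starRingEnd ℂ (U ξ) * Complex.exp (2 * Real.pi * I * b * ξ)

theorem voiceTransform_eq_fourierInv (U V : ℝ → ℂ) :
    voiceTransform U V = 𝓕⁻ (fun ξ => V ξ * starRingEnd ℂ (U ξ)) :=
  funext fun b => (Real.fourierInv_eq_integral_mul_exp _ b).symm

theorem eLpNorm_voiceTransform_eq {U V : ℝ → ℂ} (hU : MemLp U 2) (hV : MemLp V 2)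
    (hVU : MemLp (fun ξ => V ξ * starRingEnd ℂ (U ξ)) 2) :
    eLpNorm (voiceTransform U V) 2 volume =
      eLpNorm (fun ξ => V ξ * starRingEnd ℂ (U ξ)) 2 volume := by
  rw [voiceTransform_eq_fourierInv]
  exact hVU.eLpNorm_fourierInv_eq (hV.integrable_mul hU.star)

theorem ae_eq_one_of_forall_setLIntegral_eq_measure {α : Type*} [MeasurableSpace α]
    {μ : Measure α} [SigmaFinite μ] {Ω : Set α} (hΩ : MeasurableSet Ω) {g : α → ℝ≥0∞}
    (hg : AEMeasurable g μ)
    (h : ∀ s, MeasurableSet s → s ⊆ Ω → μ s < ∞ → ∫⁻ x in s, g x ∂μ = μ s) :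
    ∀ᵐ x ∂μ, x ∈ Ω → g x = 1 := by
  refine (ae_restrict_iff' hΩ).mp <| ae_eq_of_forall_setLIntegral_eq_of_sigmaFinite₀
    hg.restrict aemeasurable_const fun s hs hsΩ => ?_
  rw [Measure.restrict_apply hs] at hsΩ
  rw [Measure.restrict_restrict hs, setLIntegral_one]
  exact h _ (hs.inter hΩ) Set.inter_subset_right hsΩ

theorem eLpNorm_voiceTransform_eq_of_ae_norm_eq_one {Ω : Set ℝ} {U V : ℝ → ℂ} (hU : MemLp U 2)
    (hUΩ : ∀ᵐ ξ, ξ ∈ Ω → ‖U ξ‖ = 1) (hV : MemLp V 2) (hVΩ : ∀ ξ, ξ ∉ Ω → V ξ = 0) :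
    eLpNorm (voiceTransform U V) 2 volume = eLpNorm V 2 volume := by
  have hnorm : ∀ᵐ ξ, ‖V ξ * starRingEnd ℂ (U ξ)‖ = ‖V ξ‖ := by
    filter_upwards [hUΩ] with ξ hξ
    by_cases hξΩ : ξ ∈ Ω
    · simp [hξ hξΩ]
    · simp [hVΩ ξ hξΩ]
  have hVU : MemLp (fun ξ => V ξ * starRingEnd ℂ (U ξ)) 2 :=
    hV.congr_norm (hV.1.mul hU.1.star) (hnorm.mono fun _ => Eq.symm)
  rw [eLpNorm_voiceTransform_eq hU hV hVU, eLpNorm_congr_norm_ae hnorm]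

theorem setLIntegral_enorm_rpow_two_eq_measure {Ω s : Set ℝ} {U : ℝ → ℂ} (hU : MemLp U 2)
    (h : ∀ V : ℝ → ℂ, MemLp V 2 → (∀ ξ, ξ ∉ Ω → V ξ = 0) →
      eLpNorm (voiceTransform U V) 2 volume = eLpNorm V 2 volume)
    (hs : MeasurableSet s) (hsΩ : s ⊆ Ω) (hs_fin : volume s < ∞) :
    ∫⁻ ξ in s, ‖U ξ‖ₑ ^ (2 : ℝ) = volume s := by
  set V : ℝ → ℂ := s.indicator fun _ => 1
  have hV : MemLp V 2 := memLp_indicator_const 2 hs 1 (Or.inr hs_fin.ne)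
  have hnorm : ∀ ξ, ‖V ξ * starRingEnd ℂ (U ξ)‖ = ‖s.indicator U ξ‖ := fun ξ => by
    by_cases hξ : ξ ∈ s <;> simp [V, hξ]
  have hVU : MemLp (fun ξ => V ξ * starRingEnd ℂ (U ξ)) 2 :=
    (hU.indicator hs).congr_norm (hV.1.mul hU.1.star) (.of_forall fun ξ => (hnorm ξ).symm)
  have hUs : eLpNorm U 2 (volume.restrict s) = volume s ^ (1 / 2 : ℝ) := by
    have hadm := h V hV fun ξ hξ => Set.indicator_of_notMem (fun hξs => hξ (hsΩ hξs)) _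
    rwa [eLpNorm_voiceTransform_eq hU hV hVU, eLpNorm_congr_norm_ae (.of_forall hnorm),
      eLpNorm_indicator_eq_eLpNorm_restrict hs, eLpNorm_indicator_const hs two_ne_zero
      ENNReal.ofNat_ne_top, enorm_one, one_mul, ENNReal.toReal_ofNat] at hadm
  have hpow := eLpNorm_nnreal_pow_eq_lintegral (p := 2) two_ne_zero (f := U)
    (μ := volume.restrict s)
  simp only [ENNReal.coe_ofNat, NNReal.coe_ofNat] at hpow
  rw [← hpow, hUs, ← ENNReal.rpow_mul]
  norm_num

theorem ae_norm_eq_one_of_eLpNorm_voiceTransform_eq {Ω : Set ℝ} (hΩ : MeasurableSet Ω)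
    {U : ℝ → ℂ} (hU : MemLp U 2)
    (h : ∀ V : ℝ → ℂ, MemLp V 2 → (∀ ξ, ξ ∉ Ω → V ξ = 0) →
      eLpNorm (voiceTransform U V) 2 volume = eLpNorm V 2 volume) :
    ∀ᵐ ξ, ξ ∈ Ω → ‖U ξ‖ = 1 := by
  filter_upwards [ae_eq_one_of_forall_setLIntegral_eq_measure hΩ
    (hU.1.enorm.pow_const (2 : ℝ)) fun s hs hsΩ hs_fin =>
      setLIntegral_enorm_rpow_two_eq_measure hU h hs hsΩ hs_fin] with ξ hξ hξΩ
  have hξ₁ : ‖U ξ‖ₑ = 1 :=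
    ENNReal.rpow_left_injective two_ne_zero ((hξ hξΩ).trans (ENNReal.one_rpow 2).symm)
  simpa using congrArg ENNReal.toReal hξ₁

theorem paleyWiener_admissible_iff_general
    (Ω : Set ℝ) (hΩmeas : MeasurableSet Ω)
    (U : ℝ → ℂ) (hU : MemLp U 2 volume) :
    (∀ V : ℝ → ℂ, MemLp V 2 volume → (∀ ξ, ξ ∉ Ω → V ξ = 0) →
      eLpNorm (fun b : ℝ =>
          ∫ ξ : ℝ, V ξ * (starRingEnd ℂ) (U ξ) *
            Complex.exp (2 * Real.pi * Complex.I * b * ξ)) 2 volume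
        = eLpNorm V 2 volume) ↔
      (∀ᵐ ξ : ℝ ∂volume, ξ ∈ Ω → ‖U ξ‖ = 1) :=
  ⟨ae_norm_eq_one_of_eLpNorm_voiceTransform_eq hΩmeas hU,
    fun hUΩ _ hV hVΩ => eLpNorm_voiceTransform_eq_of_ae_norm_eq_one hU hUΩ hV hVΩ⟩

/-- For the translation representation `π(b)v(x) = v(x−b)` of `ℝ` on the Paley–Wiener space
`B²_Ω` of `L²` functions with Fourier transform supported in a compact set `Ω`, a vector `u`
is admissible (the voice transform `V v(b) = ⟨v, π(b)u⟩ = F⁻¹(v̂ · conj û)(b)` is an isometry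
into `L²(ℝ)`) if and only if `|û| = 1` almost everywhere on `Ω`.  Here the space `B²_Ω` is
described on the frequency side via Plancherel: vectors are represented by their Fourier
transforms `V, U ∈ L²`, supported in `Ω`, and `‖v‖₂ = ‖v̂‖₂`. -/
theorem paleyWiener_admissible_iff
    (Ω : Set ℝ) (hΩ : IsCompact Ω) (hΩmeas : MeasurableSet Ω)
    (U : ℝ → ℂ) (hU : MemLp U 2 volume) (hUsupp : ∀ ξ, ξ ∉ Ω → U ξ = 0) :
    (∀ V : ℝ → ℂ, MemLp V 2 volume → (∀ ξ, ξ ∉ Ω → V ξ = 0) →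
      eLpNorm (fun b : ℝ =>
          ∫ ξ : ℝ, V ξ * (starRingEnd ℂ) (U ξ) *
            Complex.exp (2 * Real.pi * Complex.I * b * ξ)) 2 volume
        = eLpNorm V 2 volume) ↔
      (∀ᵐ ξ : ℝ ∂volume, ξ ∈ Ω → ‖U ξ‖ = 1) :=
  paleyWiener_admissible_iff_general Ω hΩmeas U hU
end

section
/- Let Y be a Banach space continuously embedded in L¹_loc(G) with a continuous representation r satisfying r(x)f(y) = f(yx) a.e., and let g ∈ L¹_loc(G) be such that ∫_G |g(x⁻¹)| ‖r(x)f‖_Y dx < ∞ for all f ∈ Y. Then for each f ∈ Y, f and g are convolvable, f ⋆ g ∈ Y, and ‖f ⋆ g‖_Y ≤ ∫_G |g(x⁻¹)| ‖r(x)f‖_Y dx. -/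
/-!
The element of `Y` is the Bochner integral `h = ∫ g(x⁻¹) • r(x) f dx`, whose norm is at most
`∫ |g(x⁻¹)| ‖r(x) f‖ dx`. Substituting `y = x w` writes `f ⋆ g (x) = ∫ f(x w) g(w⁻¹) dw`, and on
`K × G` with `K` compact this integrand is integrable because
`∫_K |f(x w)| dx = ∫_K |r(w) f| ≤ C_K ‖r(w) f‖`. Fubini then gives convolvability, and since
integration over `K` is a continuous functional on `Y`, it commutes with the Bochner integral:
`∫_K h = ∫_K f ⋆ g` for every compact `K`, which identifies `h` with `f ⋆ g` almost everywhere.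
-/

open MeasureTheory

theorem ae_of_forall_isCompact_ae_restrict {X : Type*} [TopologicalSpace X] [SigmaCompactSpace X]
    [MeasurableSpace X] {μ : Measure X} {P : X → Prop}
    (h : ∀ K, IsCompact K → ∀ᵐ x ∂μ.restrict K, P x) : ∀ᵐ x ∂μ, P x := by
  rw [← μ.restrict_univ, ← iUnion_compactCovering]
  exact (ae_restrict_iUnion_iff _ _).2 fun n => h _ (isCompact_compactCovering X n)

theorem ae_eq_of_forall_setIntegral_isCompact_eq {X : Type*} [TopologicalSpace X]
    [SigmaCompactSpace X] [R1Space X] [MeasurableSpace X] [BorelSpace X] {μ : Measure X}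
    {E : Type*} [NormedAddCommGroup E] [NormedSpace ℝ E] [CompleteSpace E] {f f' : X → E}
    (hf : LocallyIntegrable f μ) (hf' : LocallyIntegrable f' μ)
    (h : ∀ K, IsCompact K → ∫ x in K, f x ∂μ = ∫ x in K, f' x ∂μ) : f =ᵐ[μ] f' := by
  have hsub := ae_eq_zero_of_forall_setIntegral_isCompact_eq_zero' (hf.sub hf') fun K hK => by
    rw [Pi.sub_def, integral_sub (hf.integrableOn_isCompact hK) (hf'.integrableOn_isCompact hK),
      h K hK, sub_self]
  filter_upwards [hsub] with x hx
  exact sub_eq_zero.1 hx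

section

variable {G : Type*} [Group G] [MeasurableSpace G] [MeasurableMul₂ G]
  {μ : Measure G} [μ.IsMulLeftInvariant] {𝕜 : Type*} [RCLike 𝕜]

theorem integral_mul_inv_mul_eq (F H : G → 𝕜) (x : G) :
    ∫ y, F y * H (y⁻¹ * x) ∂μ = ∫ w, F (x * w) * H w⁻¹ ∂μ := by
  rw [← integral_mul_left_eq_self _ x]
  simp [mul_assoc]

theorem MeasureTheory.AEStronglyMeasurable.mul_right_translate_mul_inv [MeasurableInv G]
    [SFinite μ] {F H : G → 𝕜} (hF : AEStronglyMeasurable F μ) (hH : AEStronglyMeasurable H μ) :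
    AEStronglyMeasurable (fun p : G × G => F (p.1 * p.2) * H p.2⁻¹) (μ.prod μ) :=
  (hF.comp_quasiMeasurePreserving (Measure.quasiMeasurePreserving_snd.comp
      (measurePreserving_prod_mul μ μ).quasiMeasurePreserving)).mul
    (hH.comp_quasiMeasurePreserving
      ((quasiMeasurePreserving_inv μ).comp Measure.quasiMeasurePreserving_snd))

variable {ν : Measure G} {F H : G → 𝕜}

theorem ae_integrable_mul_inv_mul_of_integrable_prod [SFinite μ] [SFinite ν]
    (hFH : Integrable (fun p : G × G => F (p.1 * p.2) * H p.2⁻¹) (ν.prod μ)) :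
    ∀ᵐ x ∂ν, Integrable (fun y => F y * H (y⁻¹ * x)) μ := by
  filter_upwards [hFH.prod_right_ae] with x hx
  simpa [mul_assoc] using hx.comp_mul_left x⁻¹

theorem integrable_integral_mul_inv_mul_of_integrable_prod [SFinite μ]
    (hFH : Integrable (fun p : G × G => F (p.1 * p.2) * H p.2⁻¹) (ν.prod μ)) :
    Integrable (fun x => ∫ y, F y * H (y⁻¹ * x) ∂μ) ν := by
  simpa only [integral_mul_inv_mul_eq] using hFH.integral_prod_left

end

section

variable {G : Type*} [MeasurableSpace G] {μ : Measure G}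
  {Y : Type*} [NormedAddCommGroup Y] [NormedSpace ℂ Y] (j : Y →ₗ[ℂ] (G → ℂ)) {K : Set G} {C : ℝ}

noncomputable def setIntegralCLM (hjK : ∀ u, IntegrableOn (j u) K μ)
    (hC : ∀ u, ∫ x in K, ‖j u x‖ ∂μ ≤ C * ‖u‖) : Y →L[ℂ] ℂ :=
  LinearMap.mkContinuous
    { toFun := fun u => ∫ x in K, j u x ∂μ
      map_add' := fun u v => by
        simpa only [map_add, Pi.add_apply] using integral_add (hjK u) (hjK v)
      map_smul' := fun c u => by
        simpa only [map_smul, Pi.smul_apply, RingHom.id_apply] using integral_smul c (j u) }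
    C fun u => (norm_integral_le_integral_norm _).trans (hC u)

theorem setIntegral_apply_integral_comm [CompleteSpace Y] (hjK : ∀ u, IntegrableOn (j u) K μ)
    (hC : ∀ u, ∫ x in K, ‖j u x‖ ∂μ ≤ C * ‖u‖) {α : Type*} [MeasurableSpace α] {ρ : Measure α}
    {φ : α → Y} (hφ : Integrable φ ρ) :
    ∫ x in K, j (∫ a, φ a ∂ρ) x ∂μ = ∫ a, ∫ x in K, j (φ a) x ∂μ ∂ρ :=
  ((setIntegralCLM j hjK hC).integral_comp_comm hφ).symm

end

section

variable {G : Type*} [Group G] [MeasurableSpace G] [MeasurableMul₂ G]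
  {μ : Measure G} [μ.IsMulLeftInvariant] [SFinite μ]
  {Y : Type*} [NormedAddCommGroup Y] [NormedSpace ℂ Y] {j : Y →ₗ[ℂ] (G → ℂ)} {r : G → Y →L[ℂ] Y}
  {K : Set G} {C : ℝ} {f : Y} {g : G → ℂ}

theorem integrable_restrict_prod_mul_right_translate_mul_inv [MeasurableInv G]
    (hjK : ∀ u, IntegrableOn (j u) K μ) (hC : ∀ u, ∫ x in K, ‖j u x‖ ∂μ ≤ C * ‖u‖)
    (hr : ∀ x, j (r x f) =ᵐ[μ] fun y => j f (y * x)) (hf : AEStronglyMeasurable (j f) μ)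
    (hg_meas : AEStronglyMeasurable g μ) (hg : Integrable (fun x => ‖g x⁻¹‖ * ‖r x f‖) μ) :
    Integrable (fun p : G × G => j f (p.1 * p.2) * g p.2⁻¹) ((μ.restrict K).prod μ) := by
  have hmeas := (hf.mul_right_translate_mul_inv hg_meas).mono_measure
    (Measure.prod_mono (Measure.restrict_le_self (s := K)) le_rfl)
  have htranslate (w : G) : (fun x => j f (x * w)) =ᵐ[μ.restrict K] j (r w f) :=
    Filter.EventuallyEq.symm (ae_restrict_of_ae (hr w))
  refine (integrable_prod_iff' hmeas).2 ⟨.of_forall fun w => ?_, ?_⟩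
  · exact ((hjK (r w f)).congr (htranslate w).symm).mul_const (g w⁻¹)
  refine (hg.const_mul C).mono' hmeas.norm.prod_swap.integral_prod_right'
    (.of_forall fun w => ?_)
  calc ‖∫ x in K, ‖j f (x * w) * g w⁻¹‖ ∂μ‖
      = (∫ x in K, ‖j (r w f) x‖ ∂μ) * ‖g w⁻¹‖ := by
        simp only [norm_mul, integral_mul_const, Real.norm_eq_abs]
        rw [abs_norm, abs_of_nonneg (integral_nonneg fun _ => norm_nonneg _)]
        exact congrArg (· * ‖g w⁻¹‖) (integral_congr_ae ((htranslate w).fun_comp norm))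
    _ ≤ C * ‖r w f‖ * ‖g w⁻¹‖ := by gcongr; exact hC _
    _ = C * (‖g w⁻¹‖ * ‖r w f‖) := by ring

theorem setIntegral_integral_smul_eq_setIntegral_integral_mul_inv_mul [CompleteSpace Y]
    (hjK : ∀ u, IntegrableOn (j u) K μ) (hC : ∀ u, ∫ x in K, ‖j u x‖ ∂μ ≤ C * ‖u‖)
    (hr : ∀ x, j (r x f) =ᵐ[μ] fun y => j f (y * x))
    (hprod : Integrable (fun p : G × G => j f (p.1 * p.2) * g p.2⁻¹) ((μ.restrict K).prod μ))
    (hrf : Integrable (fun w => g w⁻¹ • r w f) μ) :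
    ∫ x in K, j (∫ w, g w⁻¹ • r w f ∂μ) x ∂μ = ∫ x in K, ∫ y, j f y * g (y⁻¹ * x) ∂μ ∂μ :=
  calc ∫ x in K, j (∫ w, g w⁻¹ • r w f ∂μ) x ∂μ
      = ∫ w, ∫ x in K, j (g w⁻¹ • r w f) x ∂μ ∂μ := setIntegral_apply_integral_comm j hjK hC hrf
    _ = ∫ w, ∫ x in K, j f (x * w) * g w⁻¹ ∂μ ∂μ := by
        refine integral_congr_ae (.of_forall fun w => integral_congr_ae ?_)
        filter_upwards [ae_restrict_of_ae (hr w)] with x hx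
        simp only [map_smul, Pi.smul_apply, smul_eq_mul, hx, mul_comm]
    _ = ∫ x in K, ∫ w, j f (x * w) * g w⁻¹ ∂μ ∂μ := (integral_integral_swap hprod).symm
    _ = ∫ x in K, ∫ y, j f y * g (y⁻¹ * x) ∂μ ∂μ := by simp only [integral_mul_inv_mul_eq]

end

/-- Let `Y` be a Banach space continuously embedded (via `j`) in `L¹_loc(G)` on a locally
compact second countable group `G` with left Haar measure, carrying a continuous
representation `r` with `r(x)f(y) = f(yx)` a.e.  If `g ∈ L¹_loc(G)` satisfies
`∫ |g(x⁻¹)| ‖r(x)f‖_Y dx < ∞` for all `f ∈ Y`, then for each `f ∈ Y` the functions `f` and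
`g` are convolvable, `f ⋆ g ∈ Y` and `‖f ⋆ g‖_Y ≤ ∫ |g(x⁻¹)| ‖r(x)f‖_Y dx`. -/
theorem conv_mem_banach_of_integrable_norm
    {G : Type*} [Group G] [TopologicalSpace G] [IsTopologicalGroup G]
    [LocallyCompactSpace G] [SecondCountableTopology G]
    [MeasurableSpace G] [BorelSpace G]
    (μ : Measure G) [μ.IsHaarMeasure]
    {Y : Type*} [NormedAddCommGroup Y] [NormedSpace ℂ Y] [CompleteSpace Y]
    (j : Y →ₗ[ℂ] (G → ℂ))
    (hj_loc : ∀ f : Y, LocallyIntegrable (j f) μ)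
    (hj_cont : ∀ 𝒦 : Set G, IsCompact 𝒦 → ∃ C : ℝ, 0 ≤ C ∧
      ∀ f : Y, ∫ x in 𝒦, ‖j f x‖ ∂μ ≤ C * ‖f‖)
    (r : G → Y →L[ℂ] Y)
    (hr_cont : ∀ f : Y, Continuous fun x => r x f)
    (hr : ∀ (x : G) (f : Y), j (r x f) =ᵐ[μ] fun y => j f (y * x))
    (g : G → ℂ) (hg_loc : LocallyIntegrable g μ)
    (hg : ∀ f : Y, Integrable (fun x => ‖g x⁻¹‖ * ‖r x f‖) μ) :
    ∀ f : Y,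
      (∀ᵐ x ∂μ, Integrable (fun y => j f y * g (y⁻¹ * x)) μ) ∧
      LocallyIntegrable (fun x => ∫ y, ‖j f y‖ * ‖g (y⁻¹ * x)‖ ∂μ) μ ∧
      ∃ h : Y, (j h =ᵐ[μ] fun x => ∫ y, j f y * g (y⁻¹ * x) ∂μ) ∧
        ‖h‖ ≤ ∫ x, ‖g x⁻¹‖ * ‖r x f‖ ∂μ := by
  intro f
  have hjK (K : Set G) (hK : IsCompact K) (u : Y) : IntegrableOn (j u) K μ :=
    (hj_loc u).integrableOn_isCompact hK
  have hprod (K : Set G) (hK : IsCompact K) :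
      Integrable (fun p : G × G => j f (p.1 * p.2) * g p.2⁻¹) ((μ.restrict K).prod μ) := by
    obtain ⟨C, -, hC⟩ := hj_cont K hK
    exact integrable_restrict_prod_mul_right_translate_mul_inv (hjK K hK) hC (hr · f)
      (hj_loc f).aestronglyMeasurable hg_loc.aestronglyMeasurable (hg f)
  have hrf : Integrable (fun x => g x⁻¹ • r x f) μ :=
    (hg f).mono' ((hg_loc.aestronglyMeasurable.comp_quasiMeasurePreserving
      (quasiMeasurePreserving_inv μ)).smul (hr_cont f).aestronglyMeasurable)
      (.of_forall fun x => (norm_smul _ _).le)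
  set h := ∫ x, g x⁻¹ • r x f ∂μ
  refine ⟨ae_of_forall_isCompact_ae_restrict fun K hK =>
    ae_integrable_mul_inv_mul_of_integrable_prod (hprod K hK), ?_, h, ?_, ?_⟩
  · refine locallyIntegrable_iff.2 fun K hK => ?_
    exact integrable_integral_mul_inv_mul_of_integrable_prod (F := fun y => ‖j f y‖)
      (H := fun y => ‖g y‖) (by simpa only [norm_mul] using (hprod K hK).norm)
  · refine ae_eq_of_forall_setIntegral_isCompact_eq (hj_loc h)
      (locallyIntegrable_iff.2 fun K hK =>
        integrable_integral_mul_inv_mul_of_integrable_prod (hprod K hK)) fun K hK => ?_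
    obtain ⟨C, -, hC⟩ := hj_cont K hK
    exact setIntegral_integral_smul_eq_setIntegral_integral_mul_inv_mul (hjK K hK) hC
      (hr · f) (hprod K hK) hrf
  · exact (norm_integral_le_integral_norm _).trans_eq
      (integral_congr_ae (.of_forall fun x => norm_smul _ _))
end
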